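/- Let α < 0 < β, ε > 0, and let p < q with ℓ := q − p, and let ℓ_α, ℓ_β ∈ [0, ε/2] be the phase lengths of [p,q]. Assume (β−α)(ℓ + ℓ_β − ℓ_α) > 4, and assume that there exists δ > 0 such that g(x/ε) = α for almost every x ∈ (p, p + δ), or that there exists δ > 0 such that g(x/ε) = α for almost every x ∈ (q − δ, q). Then there exist no v ∈ ℝ and no Lipschitz function n : [p,q] → [−1,1] with n(p) = 1, n(q) = −1 and n'(x) = v − g(x/ε) for almost every x ∈ [p,q]; that is, the edge is not calibrable. -/

import Mathlib

/-!
Near an endpoint in the `α`-phase the field has slope `v - α`; since it starts at its maximum `1`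
(or ends at its minimum `-1`) there, this forces `v ≤ α`. Integrating `n' = v - g(·/ε)` over the
whole edge gives `v ℓ - ∫ g(·/ε) = -2`, whereas `v ≤ α` and the phase-length formula for the
integral give `v ℓ - ∫ g(·/ε) ≤ -(β - α)(ℓ + ℓ_β - ℓ_α)/2 < -2`.
-/

open MeasureTheory Set

/-- The 1-periodic forcing term: `α` within distance `1/4` of the integers, `β` otherwise. -/
noncomputable def g (α β x : ℝ) : ℝ := if |x - (round x : ℝ)| ≤ 1/4 then α else β

/-- The edge `[p,q]` with endpoint values `a`, `b` is calibrated with velocity `v` by the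
Lipschitz field `n : [p,q] → [-1,1]` satisfying `n' = v - g(·/ε)` a.e. on `[p,q]`. -/
def Calibrates (α β ε p q a b v : ℝ) (n : ℝ → ℝ) : Prop :=
  (∃ K : NNReal, LipschitzOnWith K n (Icc p q)) ∧
  (∀ x ∈ Icc p q, n x ∈ Icc (-1 : ℝ) 1) ∧
  n p = a ∧ n q = b ∧
  ∀ᵐ x ∂(volume.restrict (Icc p q)), HasDerivAt n (v - g α β (x / ε)) x

theorem LipschitzOnWith.integral_eq_sub_of_ae_hasDerivAt {f f' : ℝ → ℝ} {K : NNReal} {a b : ℝ}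
    (hf : LipschitzOnWith K f (uIcc a b))
    (hf' : ∀ᵐ x ∂(volume.restrict (uIcc a b)), HasDerivAt f (f' x) x) :
    ∫ x in a..b, f' x = f b - f a := by
  rw [← hf.absolutelyContinuousOnInterval.integral_deriv_eq_sub]
  rw [ae_restrict_iff' measurableSet_uIcc] at hf'
  refine intervalIntegral.integral_congr_ae ?_
  filter_upwards [hf'] with x hx hxI
  exact (hx (uIoc_subset_uIcc hxI)).deriv.symm

theorem measurable_g (α β : ℝ) : Measurable (g α β) := by
  have hround : Measurable fun x : ℝ => ((round x : ℤ) : ℝ) := by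
    simp only [round_eq]
    exact measurable_from_top.comp (measurable_id.add_const _).floor
  exact Measurable.ite (measurableSet_le (measurable_id.sub hround).abs measurable_const)
    measurable_const measurable_const

theorem norm_g_le (α β x : ℝ) : ‖g α β x‖ ≤ |α| + |β| := by
  unfold g
  split_ifs
  · exact le_add_of_nonneg_right (abs_nonneg β)
  · exact le_add_of_nonneg_left (abs_nonneg α)

theorem intervalIntegrable_g_div (α β ε s t : ℝ) :
    IntervalIntegrable (fun x => g α β (x / ε)) volume s t :=
  (intervalIntegrable_const (c := |α| + |β|)).mono_fun'
    ((measurable_g α β).comp (measurable_id.div_const ε)).aestronglyMeasurable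
    (ae_of_all _ fun x => norm_g_le α β (x / ε))

namespace Calibrates

variable {α β ε p q a b v : ℝ} {n : ℝ → ℝ}

theorem sub_eq_integral (h : Calibrates α β ε p q a b v n) {s t : ℝ}
    (hs : p ≤ s) (hst : s ≤ t) (ht : t ≤ q) :
    n t - n s = ∫ x in s..t, (v - g α β (x / ε)) := by
  obtain ⟨⟨K, hK⟩, -, -, -, hder⟩ := h
  have hsub : uIcc s t ⊆ Icc p q := by
    rw [uIcc_of_le hst]
    exact Icc_subset_Icc hs ht
  exact ((hK.mono hsub).integral_eq_sub_of_ae_hasDerivAt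
    (ae_restrict_of_ae_restrict_of_subset hsub hder)).symm

theorem velocity_mul_length_sub_integral (h : Calibrates α β ε p q a b v n) (hpq : p ≤ q) :
    v * (q - p) - ∫ x in p..q, g α β (x / ε) = b - a := by
  rw [← h.2.2.1, ← h.2.2.2.1, h.sub_eq_integral le_rfl hpq le_rfl,
    intervalIntegral.integral_sub intervalIntegrable_const (intervalIntegrable_g_div α β ε p q),
    intervalIntegral.integral_const, smul_eq_mul, mul_comm]

theorem sub_eq_of_ae_g_eq (h : Calibrates α β ε p q a b v n) {s t c : ℝ}
    (hs : p ≤ s) (hst : s ≤ t) (ht : t ≤ q)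
    (hc : ∀ᵐ x ∂(volume.restrict (Ioo s t)), g α β (x / ε) = c) :
    n t - n s = (v - c) * (t - s) := by
  rw [h.sub_eq_integral hs hst ht, intervalIntegral.integral_of_le hst,
    integral_Ioc_eq_integral_Ioo, integral_congr_ae (hc.mono fun x hx => by rw [hx]),
    setIntegral_const, Real.volume_real_Ioo_of_le hst, smul_eq_mul, mul_comm]

theorem velocity_le_of_ae_g_eq_near_left (h : Calibrates α β ε p q 1 b v n) (hpq : p < q)
    {δ : ℝ} (hδ : 0 < δ) (hphase : ∀ᵐ x ∂(volume.restrict (Ioo p (p + δ))), g α β (x / ε) = α) :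
    v ≤ α := by
  set r := min (p + δ) q
  have hpr : p < r := lt_min (by linarith) hpq
  have hrq : r ≤ q := min_le_right _ _
  have hslope := h.sub_eq_of_ae_g_eq le_rfl hpr.le hrq
    (ae_restrict_of_ae_restrict_of_subset (Ioo_subset_Ioo_right (min_le_left _ _)) hphase)
  have hnr : n r ≤ 1 := (h.2.1 r ⟨hpr.le, hrq⟩).2
  rw [h.2.2.1] at hslope
  nlinarith

theorem velocity_le_of_ae_g_eq_near_right (h : Calibrates α β ε p q a (-1) v n) (hpq : p < q)
    {δ : ℝ} (hδ : 0 < δ) (hphase : ∀ᵐ x ∂(volume.restrict (Ioo (q - δ) q)), g α β (x / ε) = α) :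
    v ≤ α := by
  set r := max (q - δ) p
  have hrq : r < q := max_lt (by linarith) hpq
  have hpr : p ≤ r := le_max_right _ _
  have hslope := h.sub_eq_of_ae_g_eq hpr hrq.le le_rfl
    (ae_restrict_of_ae_restrict_of_subset (Ioo_subset_Ioo_left (le_max_left _ _)) hphase)
  have hnr : -1 ≤ n r := (h.2.1 r ⟨hpr, hrq.le⟩).1
  rw [h.2.2.2.1] at hslope
  nlinarith

end Calibrates

theorem stmt9_general (α β ε p q lα lβ : ℝ)
    (hpq : p < q)
    (hint : ∫ s in p..q, g α β (s / ε)
      = (α + β) / 2 * ((q - p) - lα - lβ) + α * lα + β * lβ)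
    (hcond : 4 < (β - α) * ((q - p) + lβ - lα))
    (hphase : (∃ δ > 0, ∀ᵐ x ∂(volume.restrict (Ioo p (p + δ))), g α β (x / ε) = α) ∨
              (∃ δ > 0, ∀ᵐ x ∂(volume.restrict (Ioo (q - δ) q)), g α β (x / ε) = α)) :
    ¬ ∃ v : ℝ, ∃ n : ℝ → ℝ, Calibrates α β ε p q 1 (-1) v n := by
  rintro ⟨v, n, hn⟩
  have hvα : v ≤ α := by
    rcases hphase with ⟨δ, hδ, hleft⟩ | ⟨δ, hδ, hright⟩
    · exact hn.velocity_le_of_ae_g_eq_near_left hpq hδ hleft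
    · exact hn.velocity_le_of_ae_g_eq_near_right hpq hδ hright
  have hflux := hn.velocity_mul_length_sub_integral hpq.le
  nlinarith [mul_le_mul_of_nonneg_right hvα (sub_nonneg.2 hpq.le)]

theorem stmt9 (α β ε p q lα lβ : ℝ) (hα : α < 0) (hβ : 0 < β) (hε0 : 0 < ε)
    (hpq : p < q)
    (hlα0 : 0 ≤ lα) (hlα1 : lα ≤ ε / 2) (hlβ0 : 0 ≤ lβ) (hlβ1 : lβ ≤ ε / 2)
    (hsum : lα + lβ = (q - p) - ε * (⌊(q - p) / ε⌋ : ℝ))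
    (hint : ∫ s in p..q, g α β (s / ε)
      = (α + β) / 2 * ((q - p) - lα - lβ) + α * lα + β * lβ)
    (hcond : 4 < (β - α) * ((q - p) + lβ - lα))
    (hphase : (∃ δ > 0, ∀ᵐ x ∂(volume.restrict (Ioo p (p + δ))), g α β (x / ε) = α) ∨
              (∃ δ > 0, ∀ᵐ x ∂(volume.restrict (Ioo (q - δ) q)), g α β (x / ε) = α)) :
    ¬ ∃ v : ℝ, ∃ n : ℝ → ℝ, Calibrates α β ε p q 1 (-1) v n :=
  stmt9_general α β ε p q lα lβ hpq hint hcond hphase
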